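/- arXiv:1710.06468 — 3 statements merged into one kernel-verified Lean document; each statement's English description precedes it below -/
import Mathlib

section
/- If a degree-2 linear operator L defines a Lefschetz operation on a finite-dimensional graded vector space W (i.e. L^p : W^{-p} → W^p is an isomorphism for all p > 0) and a degree-2 operator l defines a Lefschetz operation on a finite-dimensional graded vector space H, then the operator l⊗1 + 1⊗L defines a Lefschetz operation on the tensor product W ⊗ H with the total grading. -/
/-!
STATEMENT 0: If a degree-2 operator `L` defines a Lefschetz operation on a
finite-dimensional graded real vector space `W` and a degree-2 operator `l`
defines a Lefschetz operation on a finite-dimensional graded real vector space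
`H`, then `l ⊗ 1 + 1 ⊗ L` (equivalently `L ⊗ 1 + 1 ⊗ l` on `W ⊗ H`) defines a
Lefschetz operation on `W ⊗ H` with the total grading.
-/

open Module TensorProduct

/-- `L` is a degree-2 operator with respect to the grading `g`. -/
def IsDeg2 {M : Type} [AddCommGroup M] [Module ℝ M]
    (g : ℤ → Submodule ℝ M) (L : Module.End ℝ M) : Prop :=
  ∀ i : ℤ, ∀ x ∈ g i, L x ∈ g (i + 2)

/-- `L` defines a Lefschetz operation: `L^p : M^{-p} → M^p` is an isomorphism
for every `p > 0`. -/
def IsLefschetz {M : Type} [AddCommGroup M] [Module ℝ M]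
    (g : ℤ → Submodule ℝ M) (L : Module.End ℝ M) : Prop :=
  ∀ p : ℕ, 0 < p →
    (∀ x ∈ g (-(p : ℤ)), (L ^ p) x ∈ g (p : ℤ)) ∧
    ∀ hmap : ∀ x ∈ g (-(p : ℤ)), (L ^ p) x ∈ g (p : ℤ),
      Function.Bijective ((L ^ p).restrict hmap)

/-- The total grading on a tensor product: `(W ⊗ H)^k = ⊕_{i+j=k} W^i ⊗ H^j`. -/
noncomputable def tgrade {W H : Type} [AddCommGroup W] [Module ℝ W]
    [AddCommGroup H] [Module ℝ H]
    (gW : ℤ → Submodule ℝ W) (gH : ℤ → Submodule ℝ H) (k : ℤ) :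
    Submodule ℝ (W ⊗[ℝ] H) :=
  ⨆ p : {q : ℤ × ℤ // q.1 + q.2 = k},
    Submodule.map₂ (TensorProduct.mk ℝ W H) (gW p.1.1) (gH p.1.2)

/-!
Call `(e, f)` an sl₂-pair if `e` has degree 2, `f` has degree `-2` and `e f - f e` acts as
multiplication by `m` in degree `m`. A Lefschetz operator `e` on a finite-dimensional graded space
extends to such a pair: the grading operator is trace-orthogonal to every `ψ` commuting with `e`
(conjugating by the isomorphisms `e ^ k : V^{-k} ≃ V^k` shows that `ψ` has the same block traces in
degrees `k` and `-k`), so by nondegeneracy of the trace form it equals `e f' - f' e` for some `f'`,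
and the degree `-2` part of `f'` does the job. If `(e, f)` and `(e', f')` are sl₂-pairs, so is
`(e ⊗ 1 + 1 ⊗ e', f ⊗ 1 + 1 ⊗ f')` for the total grading. Finally the sl₂ relations alone make
`e ^ p` injective on `V^{-p}` and `f ^ p` injective on `V^p`, so `e ^ p : V^{-p} → V^p` is
bijective.
-/

open DirectSum Pointwise
open LinearMap (rTensor lTensor rTensor_tmul lTensor_tmul)

section Graded

variable {K V : Type*} [Field K] [AddCommGroup V] [Module K V]

def HasDegree (g : ℤ → Submodule K V) (d : ℤ) (φ : Module.End K V) : Prop :=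
  ∀ m : ℤ, ∀ x ∈ g m, φ x ∈ g (m + d)

theorem HasDegree.pow {g : ℤ → Submodule K V} {d : ℤ} {φ : Module.End K V}
    (hφ : HasDegree g d φ) (n : ℕ) : HasDegree g (n * d) (φ ^ n) := by
  induction n with
  | zero => intro m x hx; simpa using hx
  | succ n ih =>
    intro m x hx
    rw [pow_succ, Module.End.mul_apply]
    convert ih _ _ (hφ m x hx) using 2
    push_cast; ring

structure IsSl2Pair (g : ℤ → Submodule K V) (e f : Module.End K V) : Prop where
  hasDegree_e : HasDegree g 2 e
  hasDegree_f : HasDegree g (-2) f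
  commutator_apply : ∀ m : ℤ, ∀ x ∈ g m, (e * f - f * e) x = (m : K) • x

namespace IsSl2Pair

variable {g : ℤ → Submodule K V} {e f : Module.End K V}

theorem symm (h : IsSl2Pair g e f) : IsSl2Pair (fun m => g (-m)) f e where
  hasDegree_e m x hx := by convert h.hasDegree_f (-m) x hx using 2; ring
  hasDegree_f m x hx := by convert h.hasDegree_e (-m) x hx using 2; ring
  commutator_apply m x hx := by
    rw [← neg_sub, LinearMap.neg_apply, h.commutator_apply (-m) x hx, Int.cast_neg, neg_smul,
      neg_neg]

theorem apply_f (h : IsSl2Pair g e f) {m : ℤ} {x : V} (hx : x ∈ g m) :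
    e (f x) = f (e x) + (m : K) • x := by
  rw [← h.commutator_apply m x hx]
  simp

theorem pow_succ_apply_f (h : IsSl2Pair g e f) {m : ℤ} {x : V} (hx : x ∈ g m) (n : ℕ) :
    (e ^ (n + 1)) (f x) = f ((e ^ (n + 1)) x) + (((n : K) + 1) * (m + n)) • (e ^ n) x := by
  induction n with
  | zero => simpa using h.apply_f hx
  | succ n ih =>
    have hmem : (e ^ (n + 1)) x ∈ g (m + 2 * (n + 1 : ℕ)) := by
      simpa [mul_comm] using (h.hasDegree_e.pow (n + 1)) m x hx
    rw [pow_succ' e (n + 1), Module.End.mul_apply, ih, map_add, map_smul, h.apply_f hmem,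
      ← Module.End.mul_apply e, ← pow_succ', ← Module.End.mul_apply e, ← pow_succ']
    push_cast
    module

theorem eq_zero_of_f_apply_eq_zero [CharZero K] (h : IsSl2Pair g e f) {p : ℕ} {x : V}
    (hx : x ∈ g (-p)) (hfx : f x = 0) (hpx : (e ^ p) x = 0) : x = 0 := by
  have hdesc : ∀ j ≤ p, (e ^ j) x = 0 := by
    intro j hj
    induction hj using Nat.decreasingInduction with
    | self => exact hpx
    | of_succ j hj ih =>
      have hcoeff : ((j : K) + 1) * ((-p : ℤ) + j) ≠ 0 := by
        have : ((-p : ℤ) : K) + j = -((p - j : ℕ) : K) := by push_cast [hj.le]; ring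
        rw [this]
        exact mul_ne_zero (Nat.cast_add_one_ne_zero j)
          (neg_ne_zero.2 (Nat.cast_ne_zero.2 (by omega)))
      have := h.pow_succ_apply_f hx j
      rw [hfx, map_zero, ih, map_zero, zero_add] at this
      exact (smul_eq_zero.1 this.symm).resolve_left hcoeff
  simpa using hdesc 0 (Nat.zero_le p)

theorem eq_zero_of_pow_apply_eq_zero [CharZero K] (h : IsSl2Pair g e f)
    (hbdd : BddBelow {m | g m ≠ ⊥}) {p : ℕ} {x : V} (hx : x ∈ g (-p)) (hpx : (e ^ p) x = 0) :
    x = 0 := by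
  obtain ⟨b, hb⟩ := hbdd
  have hbot : ∀ m < b, g m = ⊥ := fun m hm => not_not.1 fun hne => (hb hne).not_gt hm
  -- descending induction on `p`: `f x` lies in degree `-(p + 2)` and is killed by `e ^ (p + 2)`
  suffices key : ∀ d p : ℕ, -(p : ℤ) - d < b → ∀ x ∈ g (-p), (e ^ p) x = 0 → x = 0 from
    key ((-b).toNat + 1) p (by omega) x hx hpx
  intro d
  induction d with
  | zero =>
    intro p hp x hx _
    simpa [hbot _ (by simpa using hp)] using hx
  | succ d ih =>
    intro p hp x hx hpx
    have hfx : f x ∈ g (-(p + 2 : ℕ)) := by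
      convert h.hasDegree_f _ x hx using 2; push_cast; ring
    have hsucc : (e ^ (p + 1)) x = 0 := by rw [pow_succ', Module.End.mul_apply, hpx, map_zero]
    have hsucc2 : (e ^ (p + 2)) x = 0 := by rw [pow_succ', Module.End.mul_apply, hsucc, map_zero]
    have hpfx : (e ^ (p + 2)) (f x) = 0 := by
      rw [h.pow_succ_apply_f hx (p + 1), hsucc2, hsucc, map_zero, smul_zero, zero_add]
    exact h.eq_zero_of_f_apply_eq_zero hx (ih (p + 2) (by push_cast; omega) (f x) hfx hpfx) hpx

end IsSl2Pair

end Graded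

theorem IsSl2Pair.isLefschetz {V : Type} [AddCommGroup V] [Module ℝ V] [FiniteDimensional ℝ V]
    {g : ℤ → Submodule ℝ V} {e f : Module.End ℝ V} (h : IsSl2Pair g e f)
    (hfin : {m | g m ≠ ⊥}.Finite) : IsLefschetz g e := by
  have hfin_neg : {m | g (-m) ≠ ⊥}.Finite := hfin.preimage neg_injective.injOn
  intro p _
  have hmapE : ∀ x ∈ g (-p), (e ^ p) x ∈ g p := fun x hx => by
    convert h.hasDegree_e.pow p _ x hx using 2; ring
  have hmapF : ∀ x ∈ g p, (f ^ p) x ∈ g (-p) := fun x hx => by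
    convert h.hasDegree_f.pow p _ x hx using 2; ring
  refine ⟨hmapE, fun hmap => ?_⟩
  have hinjE : Function.Injective ((e ^ p).restrict hmap) :=
    (injective_iff_map_eq_zero _).2 fun x hx =>
      Subtype.ext (h.eq_zero_of_pow_apply_eq_zero hfin.bddBelow x.2 (congrArg Subtype.val hx))
  have hinjF : Function.Injective ((f ^ p).restrict hmapF) :=
    (injective_iff_map_eq_zero _).2 fun x hx =>
      Subtype.ext (h.symm.eq_zero_of_pow_apply_eq_zero hfin_neg.bddBelow (by simp)
        (congrArg Subtype.val hx))
  have hrank := le_antisymm (LinearMap.finrank_le_finrank_of_injective hinjE)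
    (LinearMap.finrank_le_finrank_of_injective hinjF)
  exact ⟨hinjE, (LinearMap.injective_iff_surjective_of_finrank_eq_finrank hrank).1 hinjE⟩

theorem Module.End.exists_mul_sub_mul_eq_of_trace_mul_eq_zero {K V : Type*} [Field K]
    [AddCommGroup V] [Module K V] [FiniteDimensional K V] {e h : Module.End K V}
    (H : ∀ ψ, Commute e ψ → LinearMap.trace K V (h * ψ) = 0) : ∃ f, e * f - f * e = h := by
  let B : LinearMap.BilinForm K (Module.End K V) :=
    (LinearMap.mul K (Module.End K V)).compr₂ (LinearMap.trace K V)
  have hB : ∀ φ ψ, B φ ψ = LinearMap.trace K V (φ * ψ) := fun _ _ => rfl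
  have hrefl : B.IsRefl := fun φ ψ hφψ => by rwa [hB, LinearMap.trace_mul_comm, ← hB]
  have hsep : ∀ φ, (∀ ψ, LinearMap.trace K V (ψ * φ) = 0) → φ = 0 := by
    intro φ hφ
    let b := Module.finBasis K V
    apply (LinearMap.toMatrix b b).injective
    rw [map_zero, Matrix.ext_iff_trace_mul_left]
    intro X
    have := hφ (Matrix.toLin b b X)
    rw [LinearMap.trace_eq_matrix_trace K b, LinearMap.toMatrix_mul,
      LinearMap.toMatrix_toLin] at this
    simpa using this
  have hnd : B.Nondegenerate := hrefl.nondegenerate_iff_separatingLeft.2 fun φ hφ =>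
    hsep φ fun ψ => by rw [LinearMap.trace_mul_comm]; exact hφ ψ
  let U := LinearMap.range (LinearMap.mulLeft K e - LinearMap.mulRight K e)
  have hU : h ∈ B.orthogonal (B.orthogonal U) := by
    intro ψ hψ
    have hcomm : e * ψ - ψ * e = 0 := hsep _ fun φ => by
      have : LinearMap.trace K V ((e * φ - φ * e) * ψ) = 0 := hψ _ ⟨φ, rfl⟩
      rw [sub_mul, map_sub] at this
      rw [mul_sub, map_sub, ← mul_assoc, ← mul_assoc, LinearMap.trace_mul_cycle K φ ψ e,
        ← neg_sub, this, neg_zero]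
    show B ψ h = 0
    rw [hB, LinearMap.trace_mul_comm]
    exact H ψ (sub_eq_zero.1 hcomm)
  rwa [LinearMap.BilinForm.orthogonal_orthogonal hnd hrefl] at hU

section Projections

variable {K V : Type*} [Field K] [AddCommGroup V] [Module K V]
  {g : ℤ → Submodule K V} [Decomposition g]

variable (g) in
def gradedProj (k : ℤ) : Module.End K V :=
  (g k).subtype ∘ₗ component K ℤ (fun i => g i) k ∘ₗ (decomposeLinearEquiv g).toLinearMap

theorem gradedProj_mem (k : ℤ) (x : V) : gradedProj g k x ∈ g k :=
  (decompose g x k).2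

theorem gradedProj_of_mem {k : ℤ} {x : V} (hx : x ∈ g k) : gradedProj g k x = x :=
  decompose_of_mem_same g hx

theorem gradedProj_of_mem_ne {m k : ℤ} {x : V} (hx : x ∈ g m) (hmk : m ≠ k) :
    gradedProj g k x = 0 :=
  decompose_of_mem_ne g hx hmk

theorem gradedProj_mul_self (k : ℤ) : gradedProj g k * gradedProj g k = gradedProj g k :=
  LinearMap.ext fun x => gradedProj_of_mem (gradedProj_mem k x)

theorem HasDegree.mul_gradedProj {d : ℤ} {φ : Module.End K V} (hφ : HasDegree g d φ) (k : ℤ) :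
    φ * gradedProj g k = gradedProj g (k + d) * φ := by
  refine decompose_lhom_ext g fun m => LinearMap.ext fun ⟨x, hx⟩ => ?_
  simp only [LinearMap.comp_apply, Submodule.subtype_apply, Module.End.mul_apply]
  by_cases hmk : m = k
  · subst hmk
    rw [gradedProj_of_mem hx, gradedProj_of_mem (hφ m x hx)]
  · rw [gradedProj_of_mem_ne hx hmk, map_zero, gradedProj_of_mem_ne (hφ m x hx) (by omega)]

variable (g) in
def gradedComponent (d : ℤ) (φ : Module.End K V) : Module.End K V :=
  toModule K ℤ V (fun j => gradedProj g (j + d) ∘ₗ φ ∘ₗ (g j).subtype) ∘ₗ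
    (decomposeLinearEquiv g).toLinearMap

theorem gradedComponent_apply_of_mem {d m : ℤ} {φ : Module.End K V} {x : V} (hx : x ∈ g m) :
    gradedComponent g d φ x = gradedProj g (m + d) (φ x) := by
  rw [gradedComponent, LinearMap.comp_apply, LinearEquiv.coe_coe, decomposeLinearEquiv_apply,
    decompose_of_mem g hx, ← lof_eq_of K, toModule_lof]
  rfl

theorem hasDegree_gradedComponent (d : ℤ) (φ : Module.End K V) :
    HasDegree g d (gradedComponent g d φ) := fun m x hx => by
  rw [gradedComponent_apply_of_mem hx]
  exact gradedProj_mem _ _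

theorem HasDegree.commutator_gradedComponent_apply {c d m : ℤ} {e φ : Module.End K V}
    (he : HasDegree g c e) {x : V} (hx : x ∈ g m) :
    (e * gradedComponent g d φ - gradedComponent g d φ * e) x =
      gradedProj g (m + d + c) ((e * φ - φ * e) x) := by
  rw [LinearMap.sub_apply, Module.End.mul_apply, Module.End.mul_apply,
    gradedComponent_apply_of_mem hx, gradedComponent_apply_of_mem (he m x hx),
    ← Module.End.mul_apply e, he.mul_gradedProj, add_right_comm, Module.End.mul_apply, ← map_sub]
  rfl

variable (g) in
def gradingOp (S : Finset ℤ) : Module.End K V :=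
  ∑ k ∈ S, (k : K) • gradedProj g k

theorem gradingOp_apply_of_mem {S : Finset ℤ} (hS : ∀ m, g m ≠ ⊥ → m ∈ S) {m : ℤ} {x : V}
    (hx : x ∈ g m) : gradingOp g S x = (m : K) • x := by
  by_cases hm : m ∈ S
  · rw [gradingOp, LinearMap.sum_apply, Finset.sum_eq_single_of_mem m hm fun k _ hkm => by
      rw [LinearMap.smul_apply, gradedProj_of_mem_ne hx (Ne.symm hkm), smul_zero]]
    rw [LinearMap.smul_apply, gradedProj_of_mem hx]
  · have : g m = ⊥ := not_not.1 (mt (hS m) hm)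
    simp_all

end Projections

namespace IsLefschetz

variable {V : Type} [AddCommGroup V] [Module ℝ V] {g : ℤ → Submodule ℝ V} {e : Module.End ℝ V}

theorem trace_gradedProj_neg_mul_of_pos [FiniteDimensional ℝ V] [Decomposition g]
    (hlef : IsLefschetz g e) (hdeg : HasDegree g 2 e) {ψ : Module.End ℝ V} (hψ : Commute e ψ)
    {p : ℕ} (hp : 0 < p) :
    LinearMap.trace ℝ V (gradedProj g (-p) * ψ) = LinearMap.trace ℝ V (gradedProj g p * ψ) := by
  obtain ⟨hmap, hbij⟩ := hlef p hp
  let A := LinearEquiv.ofBijective _ (hbij hmap)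
  -- `B` inverts `e ^ p : g (-p) ≃ g p` and vanishes on the other graded pieces
  let B : Module.End ℝ V := (g (-p)).subtype ∘ₗ A.symm.toLinearMap ∘ₗ
    (gradedProj g p).codRestrict (g p) (gradedProj_mem p)
  have hAB : e ^ p * B = gradedProj g p := LinearMap.ext fun x =>
    congrArg Subtype.val (A.apply_symm_apply _)
  have hBA : B * (e ^ p * gradedProj g (-p)) = gradedProj g (-p) := LinearMap.ext fun x => by
    have hx := gradedProj_mem (g := g) (-p) x
    have : (gradedProj g p).codRestrict (g p) (gradedProj_mem p) ((e ^ p) (gradedProj g (-p) x))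
        = A ⟨_, hx⟩ := Subtype.ext (gradedProj_of_mem (hmap _ hx))
    simp only [B, Module.End.mul_apply, LinearMap.comp_apply, this, LinearEquiv.coe_coe,
      LinearEquiv.symm_apply_apply, Submodule.subtype_apply]
  have hdegp : e ^ p * gradedProj g (-p) = gradedProj g p * e ^ p := by
    rw [(hdeg.pow p).mul_gradedProj]
    congr 2
    ring
  calc LinearMap.trace ℝ V (gradedProj g (-p) * ψ)
      = LinearMap.trace ℝ V (B * (e ^ p * gradedProj g (-p)) * ψ) := by rw [hBA]
    _ = LinearMap.trace ℝ V (gradedProj g p * ψ * (e ^ p * B)) := by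
      rw [hdegp, mul_assoc, LinearMap.trace_mul_comm, mul_assoc (gradedProj g p),
        (hψ.pow_left p).eq]
      simp only [mul_assoc]
    _ = LinearMap.trace ℝ V (gradedProj g p * ψ) := by
      rw [hAB, LinearMap.trace_mul_cycle, gradedProj_mul_self]

theorem trace_gradedProj_neg_mul [FiniteDimensional ℝ V] [Decomposition g]
    (hlef : IsLefschetz g e) (hdeg : HasDegree g 2 e) {ψ : Module.End ℝ V} (hψ : Commute e ψ)
    (k : ℤ) :
    LinearMap.trace ℝ V (gradedProj g (-k) * ψ) = LinearMap.trace ℝ V (gradedProj g k * ψ) := by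
  have key : ∀ p : ℕ, LinearMap.trace ℝ V (gradedProj g (-p) * ψ) =
      LinearMap.trace ℝ V (gradedProj g p * ψ) := fun p =>
    (Nat.eq_zero_or_pos p).elim (by rintro rfl; simp)
      (hlef.trace_gradedProj_neg_mul_of_pos hdeg hψ)
  obtain ⟨p, rfl | rfl⟩ := Int.eq_nat_or_neg k
  · exact key p
  · rw [neg_neg]
    exact (key p).symm

theorem trace_gradingOp_mul_eq_zero [FiniteDimensional ℝ V] [Decomposition g]
    (hlef : IsLefschetz g e) (hdeg : HasDegree g 2 e) {S : Finset ℤ} (hS : ∀ k ∈ S, -k ∈ S)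
    {ψ : Module.End ℝ V} (hψ : Commute e ψ) : LinearMap.trace ℝ V (gradingOp g S * ψ) = 0 := by
  rw [gradingOp, Finset.sum_mul, map_sum]
  refine Finset.sum_involution (fun k _ => -k) (fun k _ => ?_) (fun k _ hk hneg => hk ?_) hS
    (fun k _ => neg_neg k)
  · rw [smul_mul_assoc, smul_mul_assoc, map_smul, map_smul, hlef.trace_gradedProj_neg_mul hdeg hψ,
      Int.cast_neg, neg_smul, add_neg_cancel]
  · obtain rfl : k = 0 := by omega
    simp

theorem exists_isSl2Pair [FiniteDimensional ℝ V] (hlef : IsLefschetz g e) (hint : IsInternal g)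
    (hdeg : HasDegree g 2 e) : ∃ f, IsSl2Pair g e f := by
  let := hint.chooseDecomposition
  have hfin : {m | g m ≠ ⊥}.Finite := Submodule.finite_ne_bot_of_iSupIndep hint.submodule_iSupIndep
  let S := hfin.toFinset ∪ -hfin.toFinset
  have hS : ∀ m, g m ≠ ⊥ → m ∈ S := fun m hm => Finset.mem_union_left _ (hfin.mem_toFinset.2 hm)
  have hS_neg : ∀ k ∈ S, -k ∈ S := by
    intro k
    simp only [S, Finset.mem_union, Finset.mem_neg', neg_neg]
    exact Or.symm
  obtain ⟨f, hf⟩ := Module.End.exists_mul_sub_mul_eq_of_trace_mul_eq_zero fun ψ hψ =>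
    hlef.trace_gradingOp_mul_eq_zero hdeg hS_neg hψ
  refine ⟨gradedComponent g (-2) f, hdeg, hasDegree_gradedComponent _ _, fun m x hx => ?_⟩
  rw [hdeg.commutator_gradedComponent_apply hx, hf, gradingOp_apply_of_mem hS hx,
    neg_add_cancel_right, map_smul, gradedProj_of_mem hx]

end IsLefschetz

theorem rTensor_add_lTensor_commutator {R M N : Type*} [CommRing R] [AddCommGroup M]
    [Module R M] [AddCommGroup N] [Module R N] (e f : Module.End R M) (e' f' : Module.End R N) :
    (rTensor N e + lTensor M e') * (rTensor N f + lTensor M f') -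
        (rTensor N f + lTensor M f') * (rTensor N e + lTensor M e') =
      rTensor N (e * f - f * e) + lTensor M (e' * f' - f' * e') := by
  refine TensorProduct.ext' fun w h => ?_
  simp only [LinearMap.sub_apply, LinearMap.add_apply, Module.End.mul_apply, rTensor_tmul,
    lTensor_tmul, map_add, sub_tmul, tmul_sub]
  abel

section Tensor

variable {W H : Type} [AddCommGroup W] [Module ℝ W] [AddCommGroup H] [Module ℝ H]
  {gW : ℤ → Submodule ℝ W} {gH : ℤ → Submodule ℝ H}

theorem tmul_mem_tgrade {i j : ℤ} {w : W} {h : H} (hw : w ∈ gW i) (hh : h ∈ gH j) :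
    w ⊗ₜ[ℝ] h ∈ tgrade gW gH (i + j) :=
  Submodule.mem_iSup_of_mem ⟨(i, j), rfl⟩ (Submodule.apply_mem_map₂ _ hw hh)

theorem tgrade_le {k : ℤ} {q : Submodule ℝ (W ⊗[ℝ] H)}
    (hq : ∀ i j, i + j = k → ∀ w ∈ gW i, ∀ h ∈ gH j, w ⊗ₜ[ℝ] h ∈ q) : tgrade gW gH k ≤ q :=
  iSup_le fun ⟨⟨i, j⟩, hij⟩ => Submodule.map₂_le.2 fun w hw h hh => hq i j hij w hw h hh

theorem finite_setOf_tgrade_ne_bot (hW : {i | gW i ≠ ⊥}.Finite) (hH : {j | gH j ≠ ⊥}.Finite) :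
    {k | tgrade gW gH k ≠ ⊥}.Finite := by
  refine (hW.add hH).subset fun k hk => ?_
  by_contra hk'
  refine hk (eq_bot_iff.2 (tgrade_le fun i j hij w hw h hh => ?_))
  by_cases hi : gW i = ⊥
  · rw [hi, Submodule.mem_bot] at hw
    simp [hw]
  by_cases hj : gH j = ⊥
  · rw [hj, Submodule.mem_bot] at hh
    simp [hh]
  exact absurd (Set.mem_add.2 ⟨i, hi, j, hj, hij⟩) hk'

theorem HasDegree.rTensor_add_lTensor {d : ℤ} {φ : Module.End ℝ W} {φ' : Module.End ℝ H}
    (hφ : HasDegree gW d φ) (hφ' : HasDegree gH d φ') :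
    HasDegree (tgrade gW gH) d (rTensor H φ + lTensor W φ') := fun m _ hx => by
  refine tgrade_le (q := (tgrade gW gH (m + d)).comap _) (fun i j hij w hw h hh => ?_) hx
  rw [Submodule.mem_comap, LinearMap.add_apply, rTensor_tmul, lTensor_tmul, ← hij]
  exact add_mem (by simpa [add_right_comm] using tmul_mem_tgrade (hφ i w hw) hh)
    (by simpa [add_assoc] using tmul_mem_tgrade hw (hφ' j h hh))

theorem IsSl2Pair.tensor {e f : Module.End ℝ W} {e' f' : Module.End ℝ H}
    (h : IsSl2Pair gW e f) (h' : IsSl2Pair gH e' f') :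
    IsSl2Pair (tgrade gW gH) (rTensor H e + lTensor W e') (rTensor H f + lTensor W f') where
  hasDegree_e := h.hasDegree_e.rTensor_add_lTensor h'.hasDegree_e
  hasDegree_f := h.hasDegree_f.rTensor_add_lTensor h'.hasDegree_f
  commutator_apply m x hx := by
    rw [rTensor_add_lTensor_commutator, ← sub_eq_zero]
    refine tgrade_le (q := LinearMap.ker (rTensor H (e * f - f * e) +
      lTensor W (e' * f' - f' * e') - (m : ℝ) • LinearMap.id)) (fun i j hij w hw v hv => ?_) hx
    rw [LinearMap.mem_ker, LinearMap.sub_apply, LinearMap.add_apply, rTensor_tmul,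
      lTensor_tmul, h.commutator_apply i w hw, h'.commutator_apply j v hv,
      LinearMap.smul_apply, LinearMap.id_apply, ← hij, Int.cast_add, add_smul, tmul_smul]
    simp only [smul_tmul', sub_self]

end Tensor

theorem stmt0 {W H : Type} [AddCommGroup W] [Module ℝ W] [FiniteDimensional ℝ W]
    [AddCommGroup H] [Module ℝ H] [FiniteDimensional ℝ H]
    (gW : ℤ → Submodule ℝ W) (gH : ℤ → Submodule ℝ H)
    (hWint : DirectSum.IsInternal gW) (hHint : DirectSum.IsInternal gH)
    (L : Module.End ℝ W) (l : Module.End ℝ H)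
    (hLdeg : IsDeg2 gW L) (hldeg : IsDeg2 gH l)
    (hL : IsLefschetz gW L) (hl : IsLefschetz gH l) :
    IsLefschetz (tgrade gW gH) (LinearMap.rTensor H L + LinearMap.lTensor W l) := by
  obtain ⟨fW, hW⟩ := hL.exists_isSl2Pair hWint hLdeg
  obtain ⟨fH, hH⟩ := hl.exists_isSl2Pair hHint hldeg
  exact (hW.tensor hH).isLefschetz (finite_setOf_tgrade_ne_bot
    (Submodule.finite_ne_bot_of_iSupIndep hWint.submodule_iSupIndep)
    (Submodule.finite_ne_bot_of_iSupIndep hHint.submodule_iSupIndep))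
end

section
/- Let H be a finite-dimensional graded real vector space and l a degree-2 operator defining a Lefschetz operation on H (centered at 0). Then l also defines a Lefschetz operation on the image l·H shifted by one degree: for every i > 1, the map l^{i-1} : l·H^{-i} → l·H^{i-2} is an isomorphism. -/
open Module

/-!
Since `l^(i-1) ∘ l = l^i` and `l^i : H^{-i} → H^i` is an isomorphism, `l^(i-1)` is injective
on `l·H^{-i}`; and as `l·H^{i-2} ⊆ H^i = l^i(H^{-i})`, every element of `l·H^{i-2}` is
`l^(i-1)` of an element of `l·H^{-i}`.
-/

open Set Function

theorem Set.bijOn_image_of_bijOn_comp {α β : Type*} {f : β → β} {g : α → β} {A C : Set α}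
    {B : Set β} (hfg : BijOn (f ∘ g) A B) (hC : g '' C ⊆ B) (hf : MapsTo f (g '' A) (g '' C)) :
    BijOn f (g '' A) (g '' C) := by
  refine ⟨hf, ?_, ?_⟩
  · rintro _ ⟨a, ha, rfl⟩ _ ⟨a', ha', rfl⟩ h
    exact congrArg g (hfg.injOn ha ha' h)
  · rintro _ ⟨c, hc, rfl⟩
    obtain ⟨a, ha, h⟩ := hfg.surjOn (hC ⟨c, hc, rfl⟩)
    exact ⟨g a, mem_image_of_mem g ha, h⟩

theorem LinearMap.bijective_restrict_iff_bijOn {R M N : Type*} [Semiring R] [AddCommMonoid M]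
    [AddCommMonoid N] [Module R M] [Module R N] {f : M →ₗ[R] N} {p : Submodule R M}
    {q : Submodule R N} (hf : ∀ x ∈ p, f x ∈ q) :
    Bijective (f.restrict hf) ↔ BijOn f p q :=
  ⟨fun h ↦ ⟨hf, (MapsTo.restrict_inj hf).1 h.1, (MapsTo.restrict_surjective_iff hf).1 h.2⟩,
    fun h ↦ h.bijective⟩

section Lefschetz

variable {M : Type} [AddCommGroup M] [Module ℝ M] {g : ℤ → Submodule ℝ M} {L : Module.End ℝ M}

theorem IsDeg2.pow_mem (hL : IsDeg2 g L) (n : ℕ) {j : ℤ} {x : M} (hx : x ∈ g j) :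
    (L ^ n) x ∈ g (j + 2 * n) := by
  induction n with
  | zero => simpa using hx
  | succ n ih =>
    rw [pow_succ', Module.End.mul_apply, Nat.cast_succ, mul_add_one, ← add_assoc]
    exact hL _ _ ih

theorem IsLefschetz.bijOn (hL : IsLefschetz g L) {p : ℕ} (hp : 0 < p) :
    BijOn (L ^ p) (g (-p)) (g p) :=
  let ⟨hmaps, hbij⟩ := hL p hp
  (LinearMap.bijective_restrict_iff_bijOn hmaps).1 (hbij hmaps)

end Lefschetz

theorem stmt6_general {H : Type} [AddCommGroup H] [Module ℝ H]
    (g : ℤ → Submodule ℝ H)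
    (l : Module.End ℝ H) (hdeg : IsDeg2 g l) (hlef : IsLefschetz g l) :
    ∀ i : ℕ, 1 < i →
      (∀ x ∈ (g (-(i : ℤ))).map (l : H →ₗ[ℝ] H),
        (l ^ (i - 1)) x ∈ (g ((i : ℤ) - 2)).map (l : H →ₗ[ℝ] H)) ∧
      ∀ hmap : ∀ x ∈ (g (-(i : ℤ))).map (l : H →ₗ[ℝ] H),
          (l ^ (i - 1)) x ∈ (g ((i : ℤ) - 2)).map (l : H →ₗ[ℝ] H),
        Function.Bijective ((l ^ (i - 1)).restrict hmap) := by
  intro i hi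
  have hcomp : ⇑(l ^ (i - 1)) ∘ ⇑l = ⇑(l ^ i) := by
    rw [← Module.End.coe_mul, pow_sub_one_mul (by omega)]
  have hcomm : Semiconj ⇑l ⇑(l ^ (i - 1)) ⇑(l ^ (i - 1)) := fun x ↦ by
    rw [← Module.End.mul_apply, ← Module.End.mul_apply, ← pow_succ', ← pow_succ]
  have hmapsTo : MapsTo (l ^ (i - 1)) (g (-i)) (g (i - 2)) := fun x hx ↦ by
    have hdeg_pow := hdeg.pow_mem (i - 1) hx
    rwa [show -(i : ℤ) + 2 * (i - 1 : ℕ) = i - 2 by omega] at hdeg_pow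
  have hC : l '' g (i - 2) ⊆ g i := by
    rintro _ ⟨x, hx, rfl⟩
    simpa using hdeg _ x hx
  have hbij : BijOn (l ^ (i - 1)) (l '' g (-i)) (l '' g (i - 2)) :=
    bijOn_image_of_bijOn_comp (hcomp ▸ hlef.bijOn (by omega)) hC (hcomm.mapsTo_image hmapsTo)
  rw [← Submodule.map_coe, ← Submodule.map_coe] at hbij
  exact ⟨fun x hx ↦ hbij.mapsTo hx,
    fun hmap ↦ (LinearMap.bijective_restrict_iff_bijOn hmap).2 hbij⟩

theorem stmt6 {H : Type} [AddCommGroup H] [Module ℝ H] [FiniteDimensional ℝ H]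
    (g : ℤ → Submodule ℝ H) (hint : DirectSum.IsInternal g)
    (l : Module.End ℝ H) (hdeg : IsDeg2 g l) (hlef : IsLefschetz g l) :
    ∀ i : ℕ, 1 < i →
      (∀ x ∈ (g (-(i : ℤ))).map (l : H →ₗ[ℝ] H),
        (l ^ (i - 1)) x ∈ (g ((i : ℤ) - 2)).map (l : H →ₗ[ℝ] H)) ∧
      ∀ hmap : ∀ x ∈ (g (-(i : ℤ))).map (l : H →ₗ[ℝ] H),
          (l ^ (i - 1)) x ∈ (g ((i : ℤ) - 2)).map (l : H →ₗ[ℝ] H),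
        Function.Bijective ((l ^ (i - 1)).restrict hmap) :=
  stmt6_general g l hdeg hlef
end

section
/- Let Σ be a fan and F a sheaf on the finite topological space Σ (open sets = subfans) given by stalks F_σ and compatible restriction maps res^σ_τ for τ ≤ σ. Then the sheaf F is flabby (every restriction of sections F(Σ) → F(S) to a subfan S is surjective) if and only if for every cone σ ∈ Σ the restriction map F([σ]) → F(∂σ) is surjective. -/
/-!
A section `t` over a subfan `S` is extended one cone at a time: for a cone `σ ∉ S` that is
minimal outside `S`, the boundary `∂σ` lies in `S`, so the local condition lifts `t|∂σ` to a
section over `[σ]`, and this glues with `t` over the open cover `S ∪ [σ]`. Since the fan is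
finite, repeating this reaches all of `Σ`. Conversely `F(Σ) → F(∂σ)` factors through `F([σ])`.
-/

/-- A subfan: a downward closed set of cones (= open set). -/
def IsSubfan {C : Type} [PartialOrder C] (S : Set C) : Prop :=
  ∀ ⦃σ τ : C⦄, τ ≤ σ → σ ∈ S → τ ∈ S

/-- Sections of the stalk-data sheaf over a set of cones. -/
def Sect {C : Type} [PartialOrder C] (F : C → Type)
    [∀ σ, AddCommGroup (F σ)] [∀ σ, Module ℝ (F σ)]
    (res : ∀ ⦃σ τ : C⦄, τ ≤ σ → F σ →ₗ[ℝ] F τ) (S : Set C) : Type :=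
  { f : ∀ σ : S, F σ // ∀ (σ τ : S) (h : τ.1 ≤ σ.1), res h (f σ) = f τ }

/-- Restriction of sections to a smaller set of cones. -/
def restrictSect {C : Type} [PartialOrder C] (F : C → Type)
    [∀ σ, AddCommGroup (F σ)] [∀ σ, Module ℝ (F σ)]
    (res : ∀ ⦃σ τ : C⦄, τ ≤ σ → F σ →ₗ[ℝ] F τ)
    {S S' : Set C} (hsub : S' ⊆ S) (f : Sect F res S) : Sect F res S' :=
  ⟨fun σ => f.1 ⟨σ.1, hsub σ.2⟩,
   fun σ τ h => f.2 ⟨σ.1, hsub σ.2⟩ ⟨τ.1, hsub τ.2⟩ h⟩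

section Flabby

variable {C : Type} [PartialOrder C] (F : C → Type) [∀ σ, AddCommGroup (F σ)]
  [∀ σ, Module ℝ (F σ)] (res : ∀ ⦃σ τ : C⦄, τ ≤ σ → F σ →ₗ[ℝ] F τ)

theorem isSubfan_Iio (σ : C) : IsSubfan (Set.Iio σ) :=
  fun _ _ hle hlt => lt_of_le_of_lt hle hlt

theorem isSubfan_Iic (σ : C) : IsSubfan (Set.Iic σ) :=
  fun _ _ hle hle' => le_trans hle hle'

theorem IsSubfan.union {S T : Set C} (hS : IsSubfan S) (hT : IsSubfan T) :
    IsSubfan (S ∪ T) :=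
  fun _ _ hle => Or.imp (hS hle) (hT hle)

theorem restrictSect_restrictSect {S₁ S₂ S₃ : Set C} (h₂₁ : S₂ ⊆ S₁) (h₃₂ : S₃ ⊆ S₂)
    (f : Sect F res S₁) :
    restrictSect F res h₃₂ (restrictSect F res h₂₁ f) = restrictSect F res (h₃₂.trans h₂₁) f :=
  rfl

theorem exists_restrictSect_union_eq {S T : Set C} (hS : IsSubfan S) (hT : IsSubfan T)
    (s : Sect F res S) (t : Sect F res T)
    (hst : ∀ ρ (hρS : ρ ∈ S) (hρT : ρ ∈ T), s.1 ⟨ρ, hρS⟩ = t.1 ⟨ρ, hρT⟩) :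
    ∃ u : Sect F res (S ∪ T), restrictSect F res Set.subset_union_left u = s := by
  classical
  let u : ∀ ρ : ↥(S ∪ T), F ρ := fun ρ =>
    if hρ : ρ.1 ∈ S then s.1 ⟨ρ, hρ⟩ else t.1 ⟨ρ, ρ.2.resolve_left hρ⟩
  refine ⟨⟨u, fun ρ τ hτρ => ?_⟩, Subtype.ext (funext fun ρ => dif_pos ρ.2)⟩
  by_cases hρ : ρ.1 ∈ S
  · have hτ : τ.1 ∈ S := hS hτρ hρ
    simp only [u, dif_pos hρ, dif_pos hτ]
    exact s.2 ⟨ρ, hρ⟩ ⟨τ, hτ⟩ hτρ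
  · have hρT : ρ.1 ∈ T := ρ.2.resolve_left hρ
    have hτT : τ.1 ∈ T := hT hτρ hρT
    simp only [u, dif_neg hρ]
    rw [t.2 ⟨ρ, hρT⟩ ⟨τ, hτT⟩ hτρ]
    split_ifs with hτ
    · exact (hst τ hτ hτT).symm
    · rfl

theorem restrictSect_univ_surjective [Finite C]
    (hloc : ∀ σ : C, Function.Surjective
      (restrictSect F res (Set.Iio_subset_Iic_self : Set.Iio σ ⊆ Set.Iic σ)))
    {S : Set C} (hS : IsSubfan S) :
    Function.Surjective (restrictSect F res (Set.subset_univ S)) := by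
  induction S using WellFoundedGT.induction with
  | ind S ih =>
  intro t
  by_cases hSuniv : S = Set.univ
  · subst hSuniv
    exact ⟨t, rfl⟩
  obtain ⟨σ, hσS, hσmin⟩ :=
    WellFounded.has_min wellFounded_lt Sᶜ (Set.nonempty_compl.mpr hSuniv)
  have hIio : Set.Iio σ ⊆ S := fun τ hτ => by_contra fun hτS => hσmin τ hτS hτ
  obtain ⟨g, hg⟩ := hloc σ (restrictSect F res hIio t)
  have hagree : ∀ ρ (hρS : ρ ∈ S) (hρσ : ρ ∈ Set.Iic σ), t.1 ⟨ρ, hρS⟩ = g.1 ⟨ρ, hρσ⟩ := by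
    intro ρ hρS hρσ
    have hlt : ρ < σ := lt_of_le_of_ne hρσ fun h => hσS (h ▸ hρS)
    exact (congrFun (congrArg Subtype.val hg) ⟨ρ, hlt⟩).symm
  obtain ⟨u, hu⟩ := exists_restrictSect_union_eq F res hS (isSubfan_Iic σ) t g hagree
  have hssub : S ⊂ S ∪ Set.Iic σ :=
    Set.ssubset_iff_of_subset Set.subset_union_left |>.mpr ⟨σ, Or.inr le_rfl, hσS⟩
  obtain ⟨f, hf⟩ := ih _ hssub (hS.union (isSubfan_Iic σ)) u
  exact ⟨f, by rw [← hu, ← hf, restrictSect_restrictSect]⟩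

end Flabby

theorem stmt11_general {C : Type} [Fintype C] [PartialOrder C]
    (F : C → Type) [∀ σ, AddCommGroup (F σ)] [∀ σ, Module ℝ (F σ)]
    (res : ∀ ⦃σ τ : C⦄, τ ≤ σ → F σ →ₗ[ℝ] F τ) :
    -- flabby
    (∀ S : Set C, IsSubfan S →
      Function.Surjective (restrictSect F res (Set.subset_univ S))) ↔
    -- local condition `F([σ]) ↠ F(∂σ)`
    (∀ σ : C, Function.Surjective
      (restrictSect F res (fun τ (hτ : τ ∈ {τ | τ < σ}) => le_of_lt hτ))) :=
  ⟨fun hflabby σ => Function.Surjective.of_comp (g := restrictSect F res (Set.subset_univ _))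
      (hflabby _ (isSubfan_Iio σ)),
    fun hloc _ hS => restrictSect_univ_surjective F res hloc hS⟩

theorem stmt11 {C : Type} [Fintype C] [PartialOrder C]
    (F : C → Type) [∀ σ, AddCommGroup (F σ)] [∀ σ, Module ℝ (F σ)]
    (res : ∀ ⦃σ τ : C⦄, τ ≤ σ → F σ →ₗ[ℝ] F τ)
    (hres_refl : ∀ σ : C, res (le_refl σ) = LinearMap.id)
    (hres_trans : ∀ (ρ τ σ : C) (h1 : ρ ≤ τ) (h2 : τ ≤ σ),
      (res h1).comp (res h2) = res (h1.trans h2)) :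
    -- flabby
    (∀ S : Set C, IsSubfan S →
      Function.Surjective (restrictSect F res (Set.subset_univ S))) ↔
    -- local condition `F([σ]) ↠ F(∂σ)`
    (∀ σ : C, Function.Surjective
      (restrictSect F res (fun τ (hτ : τ ∈ {τ | τ < σ}) => le_of_lt hτ))) :=
  stmt11_general F res
end
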